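/- arXiv:2211.04408 — 3 statements merged into one kernel-verified Lean document; each statement's English description precedes it below -/
import Mathlib

section
/- Let C ≥ c > 0 be constants, let n ≥ 1, and let L be an integer with L ≥ 2. Let 𝓛 ⊂ ℝⁿ be a set of exactly L points with ‖x‖ ≤ √(nC) for every x ∈ 𝓛 and ‖x − x′‖ ≥ √(nc) for all distinct x, x′ ∈ 𝓛. Let O ∈ ℝⁿ and r > 0 be such that max_{x∈𝓛} ‖x − O‖ = r and r² = rad²(𝓛) (O is the center of the smallest enclosing ball of 𝓛), and let x₀ ∈ 𝓛 satisfy ‖x₀ − O‖ = r. Set α := arcsin( √(nc)/(2r) ) (note that √(nc)/2 ≤ r, so α is well defined). Then every point y lying in the affine span of 𝓛 and satisfying ⟨ y − O , O − x₀ ⟩ ≥ cos(α)·‖y − O‖·‖O − x₀‖ (i.e., y lies in the cone with apex O, axis pointing from x₀ through O, and angular radius α) satisfies ‖y − x‖ ≤ ‖y − x₀‖ for every x ∈ 𝓛; that is, x₀ is a farthest point of 𝓛 from y. -/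
/-!
Put `u = y - O`, `b = x₀ - O` and `v = x₀ - x`. Since `‖x - O‖ ≤ ‖b‖`, we get
`‖y - x‖² - ‖y - x₀‖² ≤ 2⟪u, v⟫`, so it suffices that `u` and `v` make an obtuse angle.
The cone condition says `∠(u, -b) ≤ α`. The chord `v` of the enclosing ball satisfies
`‖v‖² ≤ 2⟪v, b⟫`, and with `‖v‖ ≥ √(nc) = 2r sin α` this gives `cos ∠(v, b) ≥ sin α`, so
`∠(v, b) ≤ π/2 - α`. The triangle inequality for angles then gives
`π = ∠(-b, b) ≤ ∠(-b, u) + ∠(u, v) + ∠(v, b) ≤ ∠(u, v) + π/2`.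
-/

open MeasureTheory

/-- Squared Chebyshev radius of a finite set of points in `ℝⁿ`:
`rad²(𝓛) = inf_y max_{x ∈ 𝓛} ‖x − y‖²`. -/
noncomputable def radSq {n : ℕ} (𝓛 : Finset (EuclideanSpace ℝ (Fin n))) : ℝ :=
  ⨅ y : EuclideanSpace ℝ (Fin n),
    sSup ((fun x => ‖x - y‖ ^ 2) '' (𝓛 : Set (EuclideanSpace ℝ (Fin n))))

open Real InnerProductGeometry
open scoped RealInnerProductSpace

section InnerProductSpace

variable {V : Type*} [NormedAddCommGroup V] [InnerProductSpace ℝ V]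

lemma InnerProductGeometry.angle_le_arccos_of_mul_le_inner {x y : V} (hx : x ≠ 0) (hy : y ≠ 0)
    {t : ℝ} (h : t * (‖x‖ * ‖y‖) ≤ ⟪x, y⟫) : angle x y ≤ arccos t := by
  have hxy : 0 < ‖x‖ * ‖y‖ := by positivity
  exact arccos_le_arccos ((le_div_iff₀ hxy).2 h)

lemma InnerProductGeometry.inner_nonpos_of_pi_div_two_le_angle {x y : V}
    (h : π / 2 ≤ angle x y) : ⟪x, y⟫ ≤ 0 := by
  rw [← cos_angle_mul_norm_mul_norm]
  exact mul_nonpos_of_nonpos_of_nonneg (cos_nonpos_of_pi_div_two_le_of_le h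
    (by linarith [angle_le_pi x y, pi_pos])) (by positivity)

/-- Two vectors within angles `arcsin t` of `w` and `arccos t` of `-w` make an obtuse angle. -/
lemma inner_nonpos_of_cos_arcsin_mul_le_inner {u v w : V} (hw : w ≠ 0) {t : ℝ} (ht : 0 ≤ t)
    (hu : cos (arcsin t) * (‖u‖ * ‖w‖) ≤ ⟪u, w⟫) (hv : t * (‖v‖ * ‖-w‖) ≤ ⟪v, -w⟫) :
    ⟪u, v⟫ ≤ 0 := by
  rcases eq_or_ne u 0 with rfl | hu0
  · simp
  rcases eq_or_ne v 0 with rfl | hv0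
  · simp
  have hangle_u : angle u w ≤ arcsin t := by
    have := angle_le_arccos_of_mul_le_inner hu0 hw hu
    rwa [arccos_cos (arcsin_nonneg.2 ht) (by linarith [arcsin_le_pi_div_two t, pi_pos])] at this
  have hangle_v : angle v (-w) ≤ π / 2 - arcsin t := by
    rw [← arccos_eq_pi_div_two_sub_arcsin]
    exact angle_le_arccos_of_mul_le_inner hv0 (neg_ne_zero.2 hw) hv
  apply inner_nonpos_of_pi_div_two_le_angle
  linarith [angle_self_neg_of_nonzero hw, angle_le_angle_add_angle w u (-w),
    angle_le_angle_add_angle u v (-w), angle_comm w u]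

lemma norm_sub_sq_le_two_mul_inner_of_norm_le {a b : V} (h : ‖a‖ ≤ ‖b‖) :
    ‖b - a‖ ^ 2 ≤ 2 * ⟪b - a, b⟫ := by
  rw [norm_sub_sq_real, inner_sub_left, real_inner_self_eq_norm_sq, real_inner_comm]
  nlinarith [norm_nonneg a]

lemma norm_sub_le_norm_sub_of_inner_nonpos {u a b : V} (hab : ‖a‖ ≤ ‖b‖)
    (h : ⟪u, b - a⟫ ≤ 0) : ‖u - a‖ ≤ ‖u - b‖ := by
  rw [← sq_le_sq₀ (norm_nonneg _) (norm_nonneg _), norm_sub_sq_real, norm_sub_sq_real]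
  rw [inner_sub_right] at h
  nlinarith [norm_nonneg a]

end InnerProductSpace

theorem stmt5_general (c : ℝ) (n : ℕ)
    (𝓛 : Finset (EuclideanSpace ℝ (Fin n)))
    (hdist : ∀ x ∈ 𝓛, ∀ x' ∈ 𝓛, x ≠ x' → Real.sqrt (n * c) ≤ ‖x - x'‖)
    (O : EuclideanSpace ℝ (Fin n)) (r : ℝ) (hr : 0 < r)
    (hmax : ∀ x ∈ 𝓛, ‖x - O‖ ≤ r)
    (x₀ : EuclideanSpace ℝ (Fin n)) (hx₀ : x₀ ∈ 𝓛) (hx₀r : ‖x₀ - O‖ = r)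
    (y : EuclideanSpace ℝ (Fin n))
    (hcone : Real.cos (Real.arcsin (Real.sqrt (n * c) / (2 * r))) * (‖y - O‖ * ‖O - x₀‖)
      ≤ (inner ℝ (y - O) (O - x₀) : ℝ)) :
    ∀ x ∈ 𝓛, ‖y - x‖ ≤ ‖y - x₀‖ := by
  intro x hx
  obtain rfl | hxx := eq_or_ne x x₀
  · rfl
  have hxO : ‖x - O‖ ≤ ‖x₀ - O‖ := hx₀r ▸ hmax x hx
  have hchord : Real.sqrt (n * c) / (2 * r) * (‖x₀ - x‖ * ‖x₀ - O‖) ≤ ⟪x₀ - x, x₀ - O⟫ := by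
    have hsep : Real.sqrt (n * c) ≤ ‖x₀ - x‖ := norm_sub_rev x x₀ ▸ hdist x hx x₀ hx₀ hxx
    have hchord_sq := norm_sub_sq_le_two_mul_inner_of_norm_le hxO
    rw [sub_sub_sub_cancel_right] at hchord_sq
    have hscale : Real.sqrt (n * c) / (2 * r) * (‖x₀ - x‖ * r)
        = Real.sqrt (n * c) * ‖x₀ - x‖ / 2 := by
      field_simp
    rw [hx₀r, hscale]
    nlinarith [norm_nonneg (x₀ - x)]
  have hobtuse : ⟪y - O, x₀ - x⟫ ≤ 0 := by
    refine inner_nonpos_of_cos_arcsin_mul_le_inner (w := O - x₀) ?_ (by positivity) hcone ?_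
    · rw [← norm_pos_iff, norm_sub_rev, hx₀r]
      exact hr
    · rwa [neg_sub]
  simpa only [sub_sub_sub_cancel_right] using norm_sub_le_norm_sub_of_inner_nonpos (u := y - O)
    hxO (by rwa [sub_sub_sub_cancel_right])

/-- The cone-in-Voronoi lemma: every point `y` of the affine span of `𝓛` lying in the cone
with apex `O` (center of the smallest enclosing ball of `𝓛`), axis from `x₀` through `O`,
and angular radius `α = arcsin(√(nc)/(2r))` has `x₀` as a farthest point of `𝓛`. -/
theorem stmt5 (Cbig c : ℝ) (hc : 0 < c) (hcC : c ≤ Cbig) (n : ℕ) (hn : 1 ≤ n)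
    (L : ℕ) (hL : 2 ≤ L) (𝓛 : Finset (EuclideanSpace ℝ (Fin n))) (hcard : 𝓛.card = L)
    (hnorm : ∀ x ∈ 𝓛, ‖x‖ ≤ Real.sqrt (n * Cbig))
    (hdist : ∀ x ∈ 𝓛, ∀ x' ∈ 𝓛, x ≠ x' → Real.sqrt (n * c) ≤ ‖x - x'‖)
    (O : EuclideanSpace ℝ (Fin n)) (r : ℝ) (hr : 0 < r)
    (hmax : ∀ x ∈ 𝓛, ‖x - O‖ ≤ r) (hrad : r ^ 2 = radSq 𝓛)
    (x₀ : EuclideanSpace ℝ (Fin n)) (hx₀ : x₀ ∈ 𝓛) (hx₀r : ‖x₀ - O‖ = r)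
    (y : EuclideanSpace ℝ (Fin n))
    (hy : y ∈ affineSpan ℝ (𝓛 : Set (EuclideanSpace ℝ (Fin n))))
    (hcone : Real.cos (Real.arcsin (Real.sqrt (n * c) / (2 * r))) * (‖y - O‖ * ‖O - x₀‖)
      ≤ (inner ℝ (y - O) (O - x₀) : ℝ)) :
    ∀ x ∈ 𝓛, ‖y - x‖ ≤ ‖y - x₀‖ :=
  stmt5_general c n 𝓛 hdist O r hr hmax x₀ hx₀ hx₀r y hcone
end

section
/- Let n ≥ 2, let L be an integer with L ≥ 2, and set a := n². Let C_a be a finite subset of the cube [−a/2, a/2]ⁿ ⊂ ℝⁿ with |C_a| ≥ L, and let C := { x + a·(1 + n^{−1.4})·z : x ∈ C_a, z ∈ ℤⁿ }. If min_{𝓛} rad²(𝓛) ≤ n^{1.2}/4, where the minimum ranges over all L-element subsets 𝓛 of C_a, then inf_{𝓛′} rad²(𝓛′) = min_{𝓛} rad²(𝓛), where the infimum ranges over all L-element subsets 𝓛′ of C. -/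
open MeasureTheory

/-! A subset of the tiling `C` either lies in one cell `C_a + a(1 + n^{-1.4})z`, and is then a
translate of a subset of `C_a` with the same Chebyshev radius, or it meets two cells. Since `C_a`
lies in a cube of side `a`, two points of different cells differ in some coordinate by at least
`a(1 + n^{-1.4}) - a = n^{0.6}`, so such a subset has squared radius at least
`(n^{0.6}/2)^2 = n^{1.2}/4`, which by hypothesis already bounds the minimum over `C_a`. -/

section

open Finset

variable {n : ℕ}

lemma sq_norm_sub_le_sSup {S : Finset (EuclideanSpace ℝ (Fin n))} {x : EuclideanSpace ℝ (Fin n)}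
    (hx : x ∈ S) (y : EuclideanSpace ℝ (Fin n)) :
    ‖x - y‖ ^ 2 ≤ sSup ((fun x => ‖x - y‖ ^ 2) '' (S : Set (EuclideanSpace ℝ (Fin n)))) :=
  le_csSup ((S.finite_toSet.image _).bddAbove) ⟨x, hx, rfl⟩

lemma radSq_nonneg (S : Finset (EuclideanSpace ℝ (Fin n))) : 0 ≤ radSq S :=
  le_ciInf fun _ => Real.sSup_nonneg <| by
    rintro _ ⟨x, -, rfl⟩
    positivity

lemma sq_half_norm_sub_le_radSq {S : Finset (EuclideanSpace ℝ (Fin n))}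
    {p q : EuclideanSpace ℝ (Fin n)} (hp : p ∈ S) (hq : q ∈ S) :
    (‖p - q‖ / 2) ^ 2 ≤ radSq S := by
  refine le_ciInf fun y => ?_
  have hp' := sq_norm_sub_le_sSup hp y
  have hq' := sq_norm_sub_le_sSup hq y
  have htri : ‖p - q‖ ≤ ‖p - y‖ + ‖q - y‖ :=
    (norm_sub_le_norm_sub_add_norm_sub p y q).trans_eq (by rw [norm_sub_rev y q])
  nlinarith [norm_nonneg (p - q), sq_nonneg (‖p - y‖ - ‖q - y‖)]

lemma radSq_image_sub (S : Finset (EuclideanSpace ℝ (Fin n))) (v : EuclideanSpace ℝ (Fin n)) :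
    radSq (S.image (· - v)) = radSq S := by
  unfold radSq
  rw [← (Equiv.subRight v).surjective.iInf_comp]
  congr! 2 with y
  rw [coe_image, Set.image_image]
  simp only [Equiv.subRight_apply, sub_sub_sub_cancel_right]

lemma csInf_eq_csInf_of_subset_of_forall_le {α : Type*} [ConditionallyCompleteLattice α]
    {A B : Set α} (hBA : B ⊆ A) (hB : B.Nonempty) (hA : BddBelow A) (h : ∀ a ∈ A, sInf B ≤ a) :
    sInf A = sInf B :=
  le_antisymm (csInf_le_csInf hA hB hBA) (le_csInf (hB.mono hBA) h)

def latticeTiling (Ca : Finset (EuclideanSpace ℝ (Fin n))) (s : ℝ) :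
    Set (EuclideanSpace ℝ (Fin n)) :=
  {p | ∃ x ∈ Ca, ∃ z : Fin n → ℤ,
    p = x + s • (WithLp.equiv 2 (Fin n → ℝ)).symm fun i => (z i : ℝ)}

lemma subset_latticeTiling (Ca : Finset (EuclideanSpace ℝ (Fin n))) (s : ℝ) :
    (Ca : Set (EuclideanSpace ℝ (Fin n))) ⊆ latticeTiling Ca s :=
  fun x hx => ⟨x, hx, 0, by ext; simp⟩

lemma sub_le_norm_sub_of_ne {a s : ℝ} {x x' : EuclideanSpace ℝ (Fin n)}
    (hx : ∀ i, |x i| ≤ a / 2) (hx' : ∀ i, |x' i| ≤ a / 2) (hs : 0 ≤ s)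
    {z z' : Fin n → ℤ} (hz : z ≠ z') :
    s - a ≤ ‖(x + s • (WithLp.equiv 2 (Fin n → ℝ)).symm fun i => (z i : ℝ)) -
      (x' + s • (WithLp.equiv 2 (Fin n → ℝ)).symm fun i => (z' i : ℝ))‖ := by
  obtain ⟨i, hi⟩ := Function.ne_iff.mp hz
  have hdz : 1 ≤ |(z i : ℝ) - z' i| := by
    exact_mod_cast Int.one_le_abs (sub_ne_zero.mpr hi)
  calc s - a ≤ s * |(z i : ℝ) - z' i| - (|x i| + |x' i|) := by
        nlinarith [hx i, hx' i]
    _ ≤ |x i - x' i + s * ((z i : ℝ) - z' i)| := by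
        have hsd : s * |(z i : ℝ) - z' i| ≤
            |x i - x' i + s * ((z i : ℝ) - z' i)| + |x i - x' i| :=
          calc s * |(z i : ℝ) - z' i|
              = |x i - x' i + s * ((z i : ℝ) - z' i) - (x i - x' i)| := by
                rw [add_sub_cancel_left, abs_mul, abs_of_nonneg hs]
            _ ≤ _ := abs_sub _ _
        linarith [abs_sub (x i) (x' i)]
    _ = ‖((x + s • (WithLp.equiv 2 (Fin n → ℝ)).symm fun i => (z i : ℝ)) -
          (x' + s • (WithLp.equiv 2 (Fin n → ℝ)).symm fun i => (z' i : ℝ))) i‖ := by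
        simp only [Real.norm_eq_abs, PiLp.sub_apply, PiLp.add_apply, PiLp.smul_apply,
          WithLp.equiv_symm_apply, smul_eq_mul]
        ring_nf
    _ ≤ _ := PiLp.norm_apply_le _ i

lemma exists_far_pair_or_translate_subset {a s : ℝ} {Ca : Finset (EuclideanSpace ℝ (Fin n))}
    (hCa : ∀ x ∈ Ca, ∀ i, |x i| ≤ a / 2) (hs : 0 ≤ s) {𝓛 : Finset (EuclideanSpace ℝ (Fin n))}
    (h𝓛 : ↑𝓛 ⊆ latticeTiling Ca s) :
    (∃ p ∈ 𝓛, ∃ q ∈ 𝓛, s - a ≤ ‖p - q‖) ∨ ∃ v, 𝓛.image (· - v) ⊆ Ca := by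
  by_cases hcell : ∃ z : Fin n → ℤ,
      ∀ p ∈ 𝓛, p - s • (WithLp.equiv 2 (Fin n → ℝ)).symm (fun i => (z i : ℝ)) ∈ Ca
  · obtain ⟨z, hz⟩ := hcell
    exact Or.inr ⟨_, image_subset_iff.mpr hz⟩
  push Not at hcell
  obtain ⟨p₀, hp₀⟩ : 𝓛.Nonempty := by
    by_contra h
    simpa [not_nonempty_iff_eq_empty.mp h] using hcell 0
  obtain ⟨x₀, hx₀, z₀, rfl⟩ := h𝓛 hp₀
  obtain ⟨p, hp, hpCa⟩ := hcell z₀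
  obtain ⟨x, hx, z, rfl⟩ := h𝓛 hp
  have hz : z ≠ z₀ := by
    rintro rfl
    simp [hx] at hpCa
  exact Or.inl ⟨_, hp, _, hp₀, sub_le_norm_sub_of_ne (hCa x hx) (hCa x₀ hx₀) hs hz⟩

end

theorem stmt16_general (n : ℕ) (hn : 2 ≤ n) (L : ℕ)
    (Ca : Finset (EuclideanSpace ℝ (Fin n)))
    (hCa : ∀ x ∈ Ca, ∀ i : Fin n, |x i| ≤ (n : ℝ) ^ 2 / 2)
    (hcard : L ≤ Ca.card)
    (hmin : sInf {r : ℝ | ∃ 𝓛 : Finset (EuclideanSpace ℝ (Fin n)),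
        𝓛 ⊆ Ca ∧ 𝓛.card = L ∧ radSq 𝓛 = r} ≤ (n : ℝ) ^ ((1.2 : ℝ)) / 4) :
    sInf {r : ℝ | ∃ 𝓛 : Finset (EuclideanSpace ℝ (Fin n)),
        (↑𝓛 : Set (EuclideanSpace ℝ (Fin n))) ⊆
          {p | ∃ x ∈ Ca, ∃ z : Fin n → ℤ,
            p = x + ((n : ℝ) ^ 2 * (1 + (n : ℝ) ^ (-(1.4 : ℝ)))) •
              ((WithLp.equiv 2 (Fin n → ℝ)).symm fun i => (z i : ℝ))} ∧
        𝓛.card = L ∧ radSq 𝓛 = r}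
      = sInf {r : ℝ | ∃ 𝓛 : Finset (EuclideanSpace ℝ (Fin n)),
          𝓛 ⊆ Ca ∧ 𝓛.card = L ∧ radSq 𝓛 = r} := by
  have hn₀ : (0 : ℝ) < n := by exact_mod_cast (by omega : 0 < n)
  have hgap : (n : ℝ) ^ 2 * (1 + (n : ℝ) ^ (-(1.4 : ℝ))) - n ^ 2 = (n : ℝ) ^ (0.6 : ℝ) := by
    rw [mul_one_add, add_sub_cancel_left, ← Real.rpow_natCast (n : ℝ) 2, ← Real.rpow_add hn₀]
    norm_num
  have hsq : (n : ℝ) ^ (1.2 : ℝ) / 4 = ((n : ℝ) ^ (0.6 : ℝ) / 2) ^ 2 := by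
    rw [div_pow, ← Real.rpow_natCast _ 2, ← Real.rpow_mul hn₀.le]
    norm_num
  have hbdd : ∀ P : Finset (EuclideanSpace ℝ (Fin n)) → Prop,
      BddBelow {r : ℝ | ∃ 𝓛, P 𝓛 ∧ 𝓛.card = L ∧ radSq 𝓛 = r} :=
    fun _ => ⟨0, by rintro _ ⟨𝓛, -, -, rfl⟩; exact radSq_nonneg 𝓛⟩
  refine csInf_eq_csInf_of_subset_of_forall_le ?_ ?_ (hbdd _) ?_
  · rintro _ ⟨𝓛, h𝓛, hcard𝓛, rfl⟩
    exact ⟨𝓛, (Finset.coe_subset.mpr h𝓛).trans (subset_latticeTiling Ca _), hcard𝓛, rfl⟩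
  · obtain ⟨𝓛, h𝓛, hcard𝓛⟩ := Finset.exists_subset_card_eq hcard
    exact ⟨_, 𝓛, h𝓛, hcard𝓛, rfl⟩
  rintro _ ⟨𝓛, h𝓛, hcard𝓛, rfl⟩
  rcases exists_far_pair_or_translate_subset hCa (by positivity) h𝓛 with
    ⟨p, hp, q, hq, hpq⟩ | ⟨v, hv⟩
  · calc _ ≤ (n : ℝ) ^ ((1.2 : ℝ)) / 4 := hmin
      _ = ((n : ℝ) ^ (0.6 : ℝ) / 2) ^ 2 := hsq
      _ ≤ (‖p - q‖ / 2) ^ 2 := by gcongr; exact hgap ▸ hpq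
      _ ≤ radSq 𝓛 := sq_half_norm_sub_le_radSq hp hq
  · rw [← radSq_image_sub 𝓛 v]
    refine csInf_le (hbdd _) ⟨_, hv, ?_, rfl⟩
    rwa [Finset.card_image_of_injective _ sub_left_injective]

/-- Tiling a finite codebook `C_a ⊆ [−a/2,a/2]ⁿ` (with `a = n²`) along the scaled integer
lattice `a(1+n^{−1.4})·ℤⁿ` preserves the minimal squared Chebyshev radius over `L`-lists,
provided the latter is at most `n^{1.2}/4`. -/
theorem stmt16 (n : ℕ) (hn : 2 ≤ n) (L : ℕ) (hL : 2 ≤ L)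
    (Ca : Finset (EuclideanSpace ℝ (Fin n)))
    (hCa : ∀ x ∈ Ca, ∀ i : Fin n, |x i| ≤ (n : ℝ) ^ 2 / 2)
    (hcard : L ≤ Ca.card)
    (hmin : sInf {r : ℝ | ∃ 𝓛 : Finset (EuclideanSpace ℝ (Fin n)),
        𝓛 ⊆ Ca ∧ 𝓛.card = L ∧ radSq 𝓛 = r} ≤ (n : ℝ) ^ ((1.2 : ℝ)) / 4) :
    sInf {r : ℝ | ∃ 𝓛 : Finset (EuclideanSpace ℝ (Fin n)),
        (↑𝓛 : Set (EuclideanSpace ℝ (Fin n))) ⊆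
          {p | ∃ x ∈ Ca, ∃ z : Fin n → ℤ,
            p = x + ((n : ℝ) ^ 2 * (1 + (n : ℝ) ^ (-(1.4 : ℝ)))) •
              ((WithLp.equiv 2 (Fin n → ℝ)).symm fun i => (z i : ℝ))} ∧
        𝓛.card = L ∧ radSq 𝓛 = r}
      = sInf {r : ℝ | ∃ 𝓛 : Finset (EuclideanSpace ℝ (Fin n)),
          𝓛 ⊆ Ca ∧ 𝓛.card = L ∧ radSq 𝓛 = r} :=
  stmt16_general n hn L Ca hCa hcard hmin
end

section
/- Let L be an integer with L ≥ 2 and let R ≥ 0. Then there exists exactly one t ∈ [1/L, 1] satisfying (L·t − 1)·e^{2R} = (L − 1)·t^{L/(L−1)}. -/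
/-! Put `p = L/(L-1)`, so that `(L-1)p = L`. Dividing by `L-1`, the equation becomes
`p c t - t^p = c/(L-1)` with `c = e^{2R} ≥ 1`. The left side is strictly increasing on `[0, 1]`,
its derivative being `p (c - t^{p-1}) > 0` for `t < 1`; at `t = 1/L` it is `c/(L-1) - L^{-p}`,
below the target, and at `t = 1` it is `pc - 1 ≥ c/(L-1)` since `p - 1/(L-1) = 1`.
The intermediate value theorem and injectivity give the unique solution. -/

open Set

theorem StrictMonoOn.existsUnique_mem_Icc_eq {α δ : Type*} [ConditionallyCompleteLinearOrder α]
    [TopologicalSpace α] [OrderTopology α] [DenselyOrdered α] [LinearOrder δ]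
    [TopologicalSpace δ] [OrderClosedTopology δ] {f : α → δ} {a b : α} {y : δ}
    (hab : a ≤ b) (hf : ContinuousOn f (Icc a b)) (hmono : StrictMonoOn f (Icc a b))
    (hy : y ∈ Icc (f a) (f b)) :
    ∃! x, x ∈ Icc a b ∧ f x = y := by
  obtain ⟨x, hx, rfl⟩ := intermediate_value_Icc hab hf hy
  exact ⟨x, ⟨hx, rfl⟩, fun x' ⟨hx', hfx'⟩ => hmono.injOn hx' hx hfx'⟩

theorem continuous_mul_sub_rpow {p : ℝ} (a : ℝ) (hp : 0 ≤ p) :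
    Continuous fun t : ℝ => a * t - t ^ p :=
  (continuous_const.mul continuous_id).sub (continuous_id.rpow_const fun _ => Or.inr hp)

theorem strictMonoOn_mul_sub_rpow {p c : ℝ} (hp : 1 < p) (hc : 1 ≤ c) :
    StrictMonoOn (fun t : ℝ => p * c * t - t ^ p) (Icc 0 1) := by
  refine strictMonoOn_of_deriv_pos (convex_Icc 0 1)
    (continuous_mul_sub_rpow _ (by linarith)).continuousOn fun t ht => ?_
  rw [interior_Icc] at ht
  have hderiv : HasDerivAt (fun t : ℝ => p * c * t - t ^ p) (p * c - p * t ^ (p - 1)) t := by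
    have h := ((hasDerivAt_id' t).const_mul (p * c)).sub
      (Real.hasDerivAt_rpow_const (p := p) (Or.inl ht.1.ne'))
    rwa [mul_one] at h
  have hpow : t ^ (p - 1) < 1 := Real.rpow_lt_one ht.1.le ht.2 (by linarith)
  rw [hderiv.deriv]
  nlinarith

theorem existsUnique_mem_Icc_mul_sub_one_mul_eq_rpow {L c : ℝ} (hL : 1 < L) (hc : 1 ≤ c) :
    ∃! t : ℝ, t ∈ Icc (1 / L) 1 ∧ (L * t - 1) * c = (L - 1) * t ^ (L / (L - 1)) := by
  set p := L / (L - 1)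
  have hL1 : 0 < L - 1 := by linarith
  have hLp : (L - 1) * p = L := mul_div_cancel₀ L hL1.ne'
  have hp : 1 < p := (one_lt_div hL1).2 (by linarith)
  have hequiv : ∀ t : ℝ,
      (L * t - 1) * c = (L - 1) * t ^ p ↔ p * c * t - t ^ p = c / (L - 1) := by
    intro t
    rw [eq_div_iff hL1.ne']
    constructor <;> intro h
    · linear_combination (c * t) * hLp + h
    · linear_combination h - (c * t) * hLp
  simp_rw [hequiv]
  have hLinv : 1 / L ∈ Icc (0 : ℝ) 1 := ⟨by positivity, (div_le_one (by linarith)).2 hL.le⟩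
  refine ((strictMonoOn_mul_sub_rpow hp hc).mono
    (Icc_subset_Icc_left hLinv.1)).existsUnique_mem_Icc_eq hLinv.2
    (continuous_mul_sub_rpow _ (by linarith)).continuousOn ⟨?_, ?_⟩
  · have hpos : 0 < (1 / L) ^ p := Real.rpow_pos_of_pos (by positivity) p
    have : p * c * (1 / L) = c / (L - 1) := by
      change L / (L - 1) * c * (1 / L) = c / (L - 1)
      field_simp
    linarith
  · have hp_sub : p - 1 / (L - 1) = 1 := by rw [← sub_div, div_self hL1.ne']
    have : p * c - c / (L - 1) = c := by linear_combination c * hp_sub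
    simp only [Real.one_rpow, mul_one]
    linarith

/-- For `L ≥ 2` and `R ≥ 0`, the equation `(Lt − 1)e^{2R} = (L−1)t^{L/(L−1)}` has exactly one
solution `t ∈ [1/L, 1]`. -/
theorem stmt18 (L : ℕ) (hL : 2 ≤ L) (R : ℝ) (hR : 0 ≤ R) :
    ∃! t : ℝ, t ∈ Set.Icc (1 / (L : ℝ)) 1 ∧
      ((L : ℝ) * t - 1) * Real.exp (2 * R) = ((L : ℝ) - 1) * t ^ ((L : ℝ) / ((L : ℝ) - 1)) :=
  existsUnique_mem_Icc_mul_sub_one_mul_eq_rpow (by exact_mod_cast hL)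
    (Real.one_le_exp (by linarith))
end
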